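/- Let k be a natural number and let M be a (2^k)×(2^k) complex matrix. Then there exists a (2^k)×(2^k) unitary matrix U such that every diagonal entry of U * M * Uᴴ equals (trace M) / 2^k. -/

import Mathlib

/-!
A `2 × 2` matrix `[[a, b], [c, d]]` is equidiagonalized by a unitary
`[[cos θ, ζ sin θ], [-ζ̄ sin θ, cos θ]]`: the phase `ζ` is chosen so that `ζ̄ b + ζ c` is a real
multiple of `a - d`, after which the difference of the new diagonal entries,
`cos 2θ (a - d) + sin 2θ (ζ̄ b + ζ c)`, vanishes for a suitable real `θ`.

Equidiagonalizability passes from `ι` and `κ` to `ι × κ`. A block-diagonal unitary first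
equalizes the diagonal inside each block `ι × {j}`; this makes all the transverse blocks
`{i} × κ` have the same trace `trace M / |ι|`, so a second block-diagonal unitary, acting along
`κ`, equalizes the whole diagonal. Induction on `k` with `2 ^ (k + 1) = 2 · 2 ^ k` concludes.
-/

open scoped Matrix ComplexConjugate Real
open Matrix Complex

namespace Matrix

variable {m o R : Type*}

theorem trace_mul_mul_conjTranspose_of_mem_unitaryGroup [Fintype m] [DecidableEq m]
    [CommRing R] [StarRing R] {U : Matrix m m R} (hU : U ∈ unitaryGroup m R)
    (M : Matrix m m R) : (U * M * Uᴴ).trace = M.trace := by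
  rw [trace_mul_cycle, ← star_eq_conjTranspose, mem_unitaryGroup_iff'.mp hU, one_mul]

theorem submatrix_mem_unitaryGroup [Fintype m] [DecidableEq m] [Fintype o] [DecidableEq o]
    [CommRing R] [StarRing R] {U : Matrix o o R} (hU : U ∈ unitaryGroup o R) (e : m ≃ o) :
    U.submatrix e e ∈ unitaryGroup m R := by
  rw [mem_unitaryGroup_iff, star_eq_conjTranspose, conjTranspose_submatrix,
    submatrix_mul_equiv, ← star_eq_conjTranspose, mem_unitaryGroup_iff.mp hU, submatrix_one_equiv]

theorem submatrix_mul_mul_conjTranspose_submatrix [Fintype m] [Fintype o] [Semiring R]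
    [StarRing R] (U M : Matrix o o R) (e : m ≃ o) :
    U.submatrix e e * M.submatrix e e * (U.submatrix e e)ᴴ = (U * M * Uᴴ).submatrix e e := by
  rw [conjTranspose_submatrix, submatrix_mul_equiv, submatrix_mul_equiv]

theorem blockDiagonal_mem_unitaryGroup [Fintype m] [DecidableEq m] [Fintype o] [DecidableEq o]
    [CommRing R] [StarRing R] {u : o → Matrix m m R} (hu : ∀ k, u k ∈ unitaryGroup m R) :
    blockDiagonal u ∈ unitaryGroup (m × o) R := by
  rw [mem_unitaryGroup_iff, star_eq_conjTranspose, blockDiagonal_conjTranspose,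
    ← blockDiagonal_mul, ← blockDiagonal_one]
  congr 1
  funext k
  exact mem_unitaryGroup_iff.mp (hu k)

theorem blockDiag_blockDiagonal_mul_mul [Fintype m] [Fintype o] [DecidableEq o]
    [NonUnitalNonAssocSemiring R] (u v : o → Matrix m m R) (M : Matrix (m × o) (m × o) R)
    (k : o) : blockDiag (blockDiagonal u * M * blockDiagonal v) k = u k * blockDiag M k * v k := by
  ext i j
  simp [blockDiag_apply, mul_apply, blockDiagonal_apply, Fintype.sum_prod_type_right, ite_mul,
    mul_ite]

theorem trace_submatrix_equiv [Fintype m] [Fintype o] [AddCommMonoid R] (M : Matrix o o R)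
    (e : m ≃ o) : (M.submatrix e e).trace = M.trace :=
  e.sum_comp fun i => M i i

theorem trace_eq_sum_trace_blockDiag [Fintype m] [Fintype o] [AddCommMonoid R]
    (M : Matrix (m × o) (m × o) R) : M.trace = ∑ k, (blockDiag M k).trace := by
  simp [trace, Fintype.sum_prod_type_right, blockDiag_apply]

end Matrix

theorem exists_phase_aligning (b c z : ℂ) :
    ∃ ζ : ℂ, ‖ζ‖ = 1 ∧ ((conj ζ * b + ζ * c) * conj z).im = 0 := by
  set x := b * conj z - conj (c * conj z)
  set ζ := exp (arg x * I)
  have hζ : ‖ζ‖ = 1 := norm_exp_ofReal_mul_I _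
  have hx : conj ζ * x = ‖x‖ := by
    calc conj ζ * x = conj ζ * (‖x‖ * ζ) := by rw [norm_mul_exp_arg_mul_I]
      _ = ‖x‖ * (conj ζ * ζ) := by ring
      _ = ‖x‖ := by rw [conj_mul', hζ]; simp
  refine ⟨ζ, hζ, ?_⟩
  have : (conj ζ * b + ζ * c) * conj z
      = ‖x‖ + (conj (ζ * (c * conj z)) + ζ * (c * conj z)) := by
    rw [← hx]; simp only [x, map_mul]; ring
  rw [this, add_im, add_im, ofReal_im, conj_im]
  ring

theorem exists_cos_mul_add_sin_mul_eq_zero {z w : ℂ} (h : (w * conj z).im = 0) :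
    ∃ φ : ℝ, Real.cos φ * z + Real.sin φ * w = 0 := by
  rcases eq_or_ne z 0 with rfl | hz
  · exact ⟨0, by simp⟩
  obtain ⟨s, rfl⟩ : ∃ s : ℝ, w = s * z := by
    refine ⟨(w / z).re, ?_⟩
    rw [← div_eq_iff hz]
    refine Complex.ext (by simp) ?_
    rw [div_im, ← sub_div, ofReal_im]
    simp only [mul_im, conj_re, conj_im] at h
    rw [div_eq_zero_iff]; left; linarith
  refine ⟨Real.arctan s + π / 2, ?_⟩
  rw [Real.cos_add_pi_div_two, Real.sin_add_pi_div_two, Real.sin_arctan, Real.cos_arctan]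
  push_cast
  ring

noncomputable def phasedRotation (θ : ℝ) (ζ : ℂ) : Matrix (Fin 2) (Fin 2) ℂ :=
  !![(Real.cos θ : ℂ), Real.sin θ * ζ; -(Real.sin θ * conj ζ), Real.cos θ]

theorem phasedRotation_mem_unitaryGroup (θ : ℝ) {ζ : ℂ} (hζ : ‖ζ‖ = 1) :
    phasedRotation θ ζ ∈ unitaryGroup (Fin 2) ℂ := by
  have hζ' : ζ * conj ζ = 1 := by rw [mul_conj', hζ]; simp
  have hθ : (Real.cos θ : ℂ) ^ 2 + (Real.sin θ : ℂ) ^ 2 = 1 := by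
    exact_mod_cast Real.cos_sq_add_sin_sq θ
  rw [mem_unitaryGroup_iff, star_eq_conjTranspose]
  ext i j
  fin_cases i <;> fin_cases j <;>
    simp [-ofReal_cos, -ofReal_sin, phasedRotation, mul_apply, conjTranspose_apply]
  all_goals first | ring1 | linear_combination (Real.sin θ : ℂ) ^ 2 * hζ' + hθ

theorem phasedRotation_conj_apply_sub (θ : ℝ) {ζ : ℂ} (hζ : ‖ζ‖ = 1)
    (A : Matrix (Fin 2) (Fin 2) ℂ) :
    let N := phasedRotation θ ζ * A * (phasedRotation θ ζ)ᴴ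
    N 0 0 - N 1 1 = Real.cos (2 * θ) * (A 0 0 - A 1 1)
      + Real.sin (2 * θ) * (conj ζ * A 0 1 + ζ * A 1 0) := by
  have hζ' : ζ * conj ζ = 1 := by rw [mul_conj', hζ]; simp
  have hθ : (Real.cos θ : ℂ) ^ 2 + (Real.sin θ : ℂ) ^ 2 = 1 := by
    exact_mod_cast Real.cos_sq_add_sin_sq θ
  simp only [mul_apply, Fin.sum_univ_two]
  simp [-ofReal_cos, -ofReal_sin, phasedRotation, conjTranspose_apply, Real.cos_two_mul,
    Real.sin_two_mul]
  linear_combination -(A 0 0 - A 1 1) * ((Real.sin θ : ℂ) ^ 2 * hζ' + hθ)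

theorem exists_unitary_conj_apply_zero_zero_eq_apply_one_one (A : Matrix (Fin 2) (Fin 2) ℂ) :
    ∃ u ∈ unitaryGroup (Fin 2) ℂ, (u * A * uᴴ) 0 0 = (u * A * uᴴ) 1 1 := by
  obtain ⟨ζ, hζ, hζ_aligned⟩ := exists_phase_aligning (A 0 1) (A 1 0) (A 0 0 - A 1 1)
  obtain ⟨φ, hφ⟩ := exists_cos_mul_add_sin_mul_eq_zero hζ_aligned
  refine ⟨phasedRotation (φ / 2) ζ, phasedRotation_mem_unitaryGroup _ hζ, ?_⟩
  rw [← sub_eq_zero, phasedRotation_conj_apply_sub _ hζ, mul_div_cancel₀ φ two_ne_zero]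
  exact hφ

def UnitarilyEquidiagonalizable (ι : Type*) [Fintype ι] [DecidableEq ι] : Prop :=
  ∀ M : Matrix ι ι ℂ, ∃ U ∈ unitaryGroup ι ℂ, ∀ i, (U * M * Uᴴ) i i = M.trace / Fintype.card ι

namespace UnitarilyEquidiagonalizable

variable {ι κ : Type*} [Fintype ι] [DecidableEq ι] [Fintype κ] [DecidableEq κ]

theorem of_unique [Unique ι] : UnitarilyEquidiagonalizable ι := by
  intro M
  refine ⟨1, one_mem _, fun i => ?_⟩
  simp [trace, Unique.eq_default i]

theorem fin_two : UnitarilyEquidiagonalizable (Fin 2) := by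
  intro A
  obtain ⟨u, hu, hdiag⟩ := exists_unitary_conj_apply_zero_zero_eq_apply_one_one A
  have htrace := trace_mul_mul_conjTranspose_of_mem_unitaryGroup hu A
  rw [trace_fin_two, ← hdiag] at htrace
  refine ⟨u, hu, fun i => ?_⟩
  fin_cases i <;> simp [← htrace, ← hdiag]

theorem of_equiv (h : UnitarilyEquidiagonalizable ι) (e : ι ≃ κ) :
    UnitarilyEquidiagonalizable κ := by
  intro M
  obtain ⟨U, hU, hdiag⟩ := h (M.submatrix e e)
  refine ⟨U.submatrix e.symm e.symm, submatrix_mem_unitaryGroup hU e.symm, fun i => ?_⟩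
  have hM : (M.submatrix e e).submatrix e.symm e.symm = M := by simp
  calc (U.submatrix e.symm e.symm * M * (U.submatrix e.symm e.symm)ᴴ) i i
      = (U * M.submatrix e e * Uᴴ) (e.symm i) (e.symm i) := by
        conv_lhs => rw [← hM]
        rw [submatrix_mul_mul_conjTranspose_submatrix, submatrix_apply]
    _ = M.trace / Fintype.card κ := by
        rw [hdiag, trace_submatrix_equiv, Fintype.card_congr e]

theorem exists_unitary_diag_eq_trace_blockDiag (h : UnitarilyEquidiagonalizable ι)
    (M : Matrix (ι × κ) (ι × κ) ℂ) : ∃ U ∈ unitaryGroup (ι × κ) ℂ,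
      ∀ i k, (U * M * Uᴴ) (i, k) (i, k) = (blockDiag M k).trace / Fintype.card ι := by
  choose u hu hdiag using fun k => h (blockDiag M k)
  refine ⟨blockDiagonal u, blockDiagonal_mem_unitaryGroup hu, fun i k => ?_⟩
  rw [← blockDiag_apply (blockDiagonal u * M * _), blockDiagonal_conjTranspose,
    blockDiag_blockDiagonal_mul_mul, hdiag]

theorem prod (hι : UnitarilyEquidiagonalizable ι) (hκ : UnitarilyEquidiagonalizable κ) :
    UnitarilyEquidiagonalizable (ι × κ) := by
  intro M
  obtain ⟨U₁, hU₁, h₁⟩ := hι.exists_unitary_diag_eq_trace_blockDiag M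
  set e := Equiv.prodComm κ ι
  set N := (U₁ * M * U₁ᴴ).submatrix e e
  obtain ⟨U₂, hU₂, h₂⟩ := hκ.exists_unitary_diag_eq_trace_blockDiag N
  have htrace : ∀ i, (blockDiag N i).trace = M.trace / Fintype.card ι := by
    intro i
    calc (blockDiag N i).trace = ∑ k, (U₁ * M * U₁ᴴ) (i, k) (i, k) := rfl
      _ = M.trace / Fintype.card ι := by
        simp only [h₁, ← Finset.sum_div, ← trace_eq_sum_trace_blockDiag]
  have hN : U₁ * M * U₁ᴴ = N.submatrix e.symm e.symm := by simp [N]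
  refine ⟨U₂.submatrix e.symm e.symm * U₁, mul_mem (submatrix_mem_unitaryGroup hU₂ _) hU₁,
    fun ⟨i, k⟩ => ?_⟩
  set V := U₂.submatrix e.symm e.symm
  calc (V * U₁ * M * (V * U₁)ᴴ) (i, k) (i, k) = (V * (U₁ * M * U₁ᴴ) * Vᴴ) (i, k) (i, k) := by
        simp only [conjTranspose_mul, Matrix.mul_assoc]
    _ = (U₂ * N * U₂ᴴ) (k, i) (k, i) := by
        rw [hN, submatrix_mul_mul_conjTranspose_submatrix]; rfl
    _ = M.trace / Fintype.card (ι × κ) := by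
        rw [h₂, htrace, Fintype.card_prod, Nat.cast_mul, div_div]

theorem fin_two_pow (k : ℕ) : UnitarilyEquidiagonalizable (Fin (2 ^ k)) := by
  induction k with
  | zero => exact of_unique (ι := Fin 1)
  | succ k ih =>
    exact (fin_two.prod ih).of_equiv (finProdFinEquiv.trans (finCongr (pow_succ' 2 k).symm))

end UnitarilyEquidiagonalizable

/-- The `2^k`-dimensional equidiagonalization result: every `2^k × 2^k` complex matrix `M`
can be conjugated by a unitary so that every diagonal entry equals `trace M / 2^k`. -/
theorem exists_unitary_equidiagonalize_pow_two (k : ℕ)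
    (M : Matrix (Fin (2 ^ k)) (Fin (2 ^ k)) ℂ) :
    ∃ U ∈ Matrix.unitaryGroup (Fin (2 ^ k)) ℂ,
      ∀ i : Fin (2 ^ k), (U * M * Uᴴ) i i = M.trace / (2 ^ k : ℂ) := by
  simpa using UnitarilyEquidiagonalizable.fin_two_pow k M
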